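/- arXiv:1806.07211 — 3 statements merged into one kernel-verified Lean document; each statement's English description precedes it below -/
import Mathlib

section
/- If Γ is a d-chordal simplicial complex on [n] and W ⊆ [n], then the induced subcomplex Γ_W is d-chordal; consequently induced subcomplexes of chordal complexes are chordal. -/
namespace ChordalPaper

/-- A simplicial complex on vertex set `Fin n`: a family of finsets closed under subsets. -/
def IsComplex {n : ℕ} (Γ : Set (Finset (Fin n))) : Prop :=
  ∀ F ∈ Γ, ∀ F' ⊆ F, F' ∈ Γ

/-- The `d`-closure `Δ_d(Γ)`: all subsets of size `≤ d`, together with all subsets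
all of whose `(d+1)`-element subsets are faces of `Γ`. -/
def dClosure {n : ℕ} (d : ℕ) (Γ : Set (Finset (Fin n))) : Set (Finset (Fin n)) :=
  {F | F.card ≤ d ∨ ∀ G ⊆ F, G.card = d + 1 → G ∈ Γ}

/-- The pure `(d-1)`-skeleton `⟨[n]⟩^{[d-1]}` of the full simplex: all subsets of size `≤ d`. -/
def fullSkel (n d : ℕ) : Set (Finset (Fin n)) := {F | F.card ≤ d}

/-- A facet: a maximal face. -/
def IsFacet {n : ℕ} (Γ : Set (Finset (Fin n))) (F : Finset (Fin n)) : Prop :=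
  F ∈ Γ ∧ ∀ G ∈ Γ, F ⊆ G → G = F

/-- A free face: a face contained in a unique facet. -/
def IsFreeFace {n : ℕ} (Γ : Set (Finset (Fin n))) (E : Finset (Fin n)) : Prop :=
  E ∈ Γ ∧ ∃! F, IsFacet Γ F ∧ E ⊆ F

/-- Collapse at `E`: remove all faces containing `E` (including `E` itself). -/
def collapseFace {n : ℕ} (Γ : Set (Finset (Fin n))) (E : Finset (Fin n)) :
    Set (Finset (Fin n)) := {F ∈ Γ | ¬ E ⊆ F}

/-- Successive collapses along a list of faces. -/
def collapseList {n : ℕ} (Γ : Set (Finset (Fin n))) :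
    List (Finset (Fin n)) → Set (Finset (Fin n))
  | [] => Γ
  | E :: L => collapseList (collapseFace Γ E) L

/-- A free sequence: each face is free in the complex obtained by collapsing the previous ones. -/
def IsFreeSeq {n : ℕ} (Γ : Set (Finset (Fin n))) : List (Finset (Fin n)) → Prop
  | [] => True
  | E :: L => IsFreeFace Γ E ∧ IsFreeSeq (collapseFace Γ E) L

/-- `d`-collapsibility: a sequence of elementary `d`-collapsings (at free faces of
dimension `< d`, i.e. cardinality `≤ d`) reduces `Γ` to the void complex. -/
def Collapsible {n : ℕ} (d : ℕ) (Γ : Set (Finset (Fin n))) : Prop :=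
  ∃ L : List (Finset (Fin n)),
    IsFreeSeq Γ L ∧ (∀ E ∈ L, E.card ≤ d) ∧ collapseList Γ L = ∅

/-- Simplicial deletion `Γ∖E`: remove all faces strictly containing `E` (keeping `E`). -/
def srDel {n : ℕ} (Γ : Set (Finset (Fin n))) (E : Finset (Fin n)) :
    Set (Finset (Fin n)) := {F ∈ Γ | ¬ E ⊂ F}

/-- Successive simplicial deletions along a list of faces. -/
def srDelList {n : ℕ} (Γ : Set (Finset (Fin n))) :
    List (Finset (Fin n)) → Set (Finset (Fin n))
  | [] => Γ
  | E :: L => srDelList (srDel Γ E) L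

/-- A simplicial order for a `d`-closure on `Fin n`: a sequence of non-facet free faces of
cardinality `d` whose successive simplicial deletions reduce the complex to the pure
`(d-1)`-skeleton of the full simplex. -/
def IsSimpOrder {n : ℕ} (d : ℕ) (Γ : Set (Finset (Fin n))) :
    List (Finset (Fin n)) → Prop
  | [] => Γ = fullSkel n d
  | E :: L => E.card = d ∧ IsFreeFace Γ E ∧ ¬ IsFacet Γ E ∧ IsSimpOrder d (srDel Γ E) L

/-- `Γ` is `d`-chordal: its `d`-closure equals the pure `(d-1)`-skeleton of the full
simplex or admits a simplicial order. -/
def DChordal {n : ℕ} (d : ℕ) (Γ : Set (Finset (Fin n))) : Prop :=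
  ∃ L, IsSimpOrder d (dClosure d Γ) L

/-- A minimal nonface of `Γ`. -/
def IsMinNonface {n : ℕ} (Γ : Set (Finset (Fin n))) (F : Finset (Fin n)) : Prop :=
  F ∉ Γ ∧ ∀ G ⊂ F, G ∈ Γ

end ChordalPaper

namespace ChordalPaper

/-- Induced subcomplex on a vertex set `W`. -/
def induced {n : ℕ} (Γ : Set (Finset (Fin n))) (W : Finset (Fin n)) :
    Set (Finset (Fin n)) := {F ∈ Γ | F ⊆ W}

/-- The `d`-closure relative to the vertex set `W`. -/
def dClosureOn {n : ℕ} (W : Finset (Fin n)) (d : ℕ) (Γ : Set (Finset (Fin n))) :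
    Set (Finset (Fin n)) :=
  {F | F ⊆ W ∧ (F.card ≤ d ∨ ∀ G ⊆ F, G.card = d + 1 → G ∈ Γ)}

/-- The pure `(d-1)`-skeleton of the full simplex on vertex set `W`. -/
def skelOn {n : ℕ} (W : Finset (Fin n)) (d : ℕ) : Set (Finset (Fin n)) :=
  {F | F ⊆ W ∧ F.card ≤ d}

/-- A simplicial order relative to the vertex set `W`. -/
def IsSimpOrderOn {n : ℕ} (W : Finset (Fin n)) (d : ℕ) (Γ : Set (Finset (Fin n))) :
    List (Finset (Fin n)) → Prop
  | [] => Γ = skelOn W d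
  | E :: L => E.card = d ∧ IsFreeFace Γ E ∧ ¬ IsFacet Γ E ∧ IsSimpOrderOn W d (srDel Γ E) L

/-- `d`-chordality as a complex on the vertex set `W`. -/
def DChordalOn {n : ℕ} (W : Finset (Fin n)) (d : ℕ) (Γ : Set (Finset (Fin n))) : Prop :=
  ∃ L, IsSimpOrderOn W d (dClosureOn W d Γ) L

end ChordalPaper

/-!
The `d`-closure commutes with passing to an induced subcomplex, so it suffices to restrict a
simplicial order of a complex `Δ` on `V` to one of `Δ_W` for `W ⊆ V`. Keep those faces `E ⊆ W`
of the order that are not already facets of the current induced complex (deleting a facet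
changes nothing). A face `E ⊆ W` that is free in `Δ`, with unique facet `F`, stays free in
`Δ_W`, with unique facet `F ∩ W`: every face of `Δ_W` containing `E` lies in a facet of `Δ`
containing `E`, hence in `F`.
-/

namespace ChordalPaper

variable {n : ℕ}

lemma IsComplex.srDel {Δ : Set (Finset (Fin n))} (hΔ : IsComplex Δ) (E : Finset (Fin n)) :
    IsComplex (srDel Δ E) :=
  fun _ hF _ hF' => ⟨hΔ _ hF.1 _ hF', fun hE => hF.2 (hE.trans_subset hF')⟩

lemma isComplex_dClosureOn (V : Finset (Fin n)) (d : ℕ) (Γ : Set (Finset (Fin n))) :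
    IsComplex (dClosureOn V d Γ) := by
  rintro F ⟨hFV, hF⟩ F' hF'
  refine ⟨hF'.trans hFV, hF.imp (fun h => (Finset.card_le_card hF').trans h) ?_⟩
  exact fun h G hG => h G (hG.trans hF')

lemma induced_srDel (Δ : Set (Finset (Fin n))) (E W : Finset (Fin n)) :
    induced (srDel Δ E) W = srDel (induced Δ W) E :=
  Set.ext fun _ => and_right_comm

lemma induced_srDel_of_not_subset (Δ : Set (Finset (Fin n))) {E W : Finset (Fin n)}
    (hEW : ¬ E ⊆ W) : induced (srDel Δ E) W = induced Δ W :=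
  Set.ext fun _ => ⟨fun ⟨⟨hF, _⟩, hFW⟩ => ⟨hF, hFW⟩,
    fun ⟨hF, hFW⟩ => ⟨⟨hF, fun hE => hEW (hE.subset.trans hFW)⟩, hFW⟩⟩

lemma srDel_eq_self_of_isFacet {Δ : Set (Finset (Fin n))} {E : Finset (Fin n)}
    (hE : IsFacet Δ E) : srDel Δ E = Δ :=
  Set.ext fun F =>
    ⟨fun hF => hF.1, fun hF => ⟨hF, fun hEF => hEF.ne (hE.2 F hF hEF.subset).symm⟩⟩

lemma induced_skelOn_of_subset {V W : Finset (Fin n)} (hWV : W ⊆ V) (d : ℕ) :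
    induced (skelOn V d) W = skelOn W d :=
  Set.ext fun _ => ⟨fun ⟨⟨_, hcard⟩, hFW⟩ => ⟨hFW, hcard⟩,
    fun ⟨hFW, hcard⟩ => ⟨⟨hFW.trans hWV, hcard⟩, hFW⟩⟩

lemma dClosureOn_induced {V W : Finset (Fin n)} (hWV : W ⊆ V) (d : ℕ)
    (Γ : Set (Finset (Fin n))) :
    dClosureOn W d (induced Γ W) = induced (dClosureOn V d Γ) W := by
  ext F
  constructor
  · rintro ⟨hFW, hF⟩
    exact ⟨⟨hFW.trans hWV, hF.imp_right fun h G hG hcard => (h G hG hcard).1⟩, hFW⟩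
  · rintro ⟨⟨_, hF⟩, hFW⟩
    exact ⟨hFW, hF.imp_right fun h G hG hcard => ⟨h G hG hcard, hG.trans hFW⟩⟩

lemma exists_isFacet_superset {Δ : Set (Finset (Fin n))} {G : Finset (Fin n)} (hG : G ∈ Δ) :
    ∃ F, IsFacet Δ F ∧ G ⊆ F := by
  obtain ⟨F, ⟨hF, hGF⟩, hmax⟩ :=
    (Set.toFinite {F | F ∈ Δ ∧ G ⊆ F}).exists_maximalFor id _ ⟨G, hG, subset_rfl⟩
  exact ⟨F, ⟨hF, fun H hH hFH => (hmax ⟨hH, hGF.trans hFH⟩ hFH).antisymm hFH⟩, hGF⟩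

lemma isFreeFace_induced {Δ : Set (Finset (Fin n))} (hΔ : IsComplex Δ) {E W : Finset (Fin n)}
    (hE : IsFreeFace Δ E) (hEW : E ⊆ W) : IsFreeFace (induced Δ W) E := by
  obtain ⟨hEΔ, F, ⟨hF, hEF⟩, huniq⟩ := hE
  have hFW : F ∩ W ∈ induced Δ W :=
    ⟨hΔ F hF.1 _ Finset.inter_subset_left, Finset.inter_subset_right⟩
  have hEFW : E ⊆ F ∩ W := Finset.subset_inter hEF hEW
  have hle : ∀ G ∈ induced Δ W, E ⊆ G → G ⊆ F ∩ W := by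
    intro G hG hEG
    obtain ⟨F', hF', hGF'⟩ := exists_isFacet_superset hG.1
    obtain rfl := huniq F' ⟨hF', hEG.trans hGF'⟩
    exact Finset.subset_inter hGF' hG.2
  have hFWfacet : IsFacet (induced Δ W) (F ∩ W) :=
    ⟨hFW, fun G hG hFWG => (hle G hG (hEFW.trans hFWG)).antisymm hFWG⟩
  refine ⟨⟨hEΔ, hEW⟩, F ∩ W, ⟨hFWfacet, hEFW⟩, ?_⟩
  rintro G ⟨hG, hEG⟩
  exact (hG.2 _ hFW (hle G hG.1 hEG)).symm

lemma IsSimpOrderOn.exists_induced {V W : Finset (Fin n)} (hWV : W ⊆ V) {d : ℕ} :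
    ∀ {Δ : Set (Finset (Fin n))} {L : List (Finset (Fin n))}, IsComplex Δ →
      IsSimpOrderOn V d Δ L → ∃ L', IsSimpOrderOn W d (induced Δ W) L'
  | _, [], _, hΔ => ⟨[], by rw [IsSimpOrderOn, hΔ, induced_skelOn_of_subset hWV]⟩
  | Δ, E :: _, hΔc, ⟨hcard, hfree, _, hrest⟩ => by
    obtain ⟨L', hL'⟩ := exists_induced hWV (hΔc.srDel E) hrest
    by_cases hEW : E ⊆ W
    · rw [induced_srDel] at hL'
      by_cases hfacet : IsFacet (induced Δ W) E
      · exact ⟨L', by rwa [srDel_eq_self_of_isFacet hfacet] at hL'⟩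
      · exact ⟨E :: L', hcard, isFreeFace_induced hΔc hfree hEW, hfacet, hL'⟩
    · exact ⟨L', by rwa [induced_srDel_of_not_subset Δ hEW] at hL'⟩

lemma dChordalOn_induced {V W : Finset (Fin n)} (hWV : W ⊆ V) {d : ℕ}
    {Γ : Set (Finset (Fin n))} (hΓ : DChordalOn V d Γ) : DChordalOn W d (induced Γ W) := by
  obtain ⟨L, hL⟩ := hΓ
  rw [DChordalOn, dClosureOn_induced hWV]
  exact hL.exists_induced hWV (isComplex_dClosureOn V d Γ)

end ChordalPaper

open ChordalPaper in
theorem stmt16_general (n d : ℕ) (Γ : Set (Finset (Fin n)))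
    (W : Finset (Fin n)) :
    (DChordalOn Finset.univ d Γ → DChordalOn W d (induced Γ W)) ∧
    ((∀ e, 1 ≤ e → DChordalOn Finset.univ e Γ) →
      ∀ e, 1 ≤ e → DChordalOn W e (induced Γ W)) :=
  ⟨dChordalOn_induced W.subset_univ, fun h e he => dChordalOn_induced W.subset_univ (h e he)⟩

open ChordalPaper in
/-- if `Γ` (a complex on `[n]`) is `d`-chordal then the induced
subcomplex `Γ_W` is `d`-chordal; consequently induced subcomplexes of chordal
complexes are chordal. -/
theorem stmt16 (n d : ℕ) (hd : 1 ≤ d) (Γ : Set (Finset (Fin n))) (hΓ : IsComplex Γ)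
    (W : Finset (Fin n)) :
    (DChordalOn Finset.univ d Γ → DChordalOn W d (induced Γ W)) ∧
    ((∀ e, 1 ≤ e → DChordalOn Finset.univ e Γ) →
      ∀ e, 1 ≤ e → DChordalOn W e (induced Γ W)) :=
  stmt16_general n d Γ W
end

section
/- If Γ is a d-representable simplicial complex on [n] (the nerve of a finite family of convex sets in R^d), then Δ_d(Γ) = Γ ∪ ⟨[n]⟩^{[d−1]}, i.e., the d-closure adds only faces of dimension at most d−1. -/
open ChordalPaper in
/-- if `Γ` is `d`-representable — the nerve of a finite family of convex
sets in `ℝ^d` — then `Δ_d(Γ) = Γ ∪ ⟨[n]⟩^{[d-1]}`. -/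
theorem stmt17 (n d : ℕ) (hd : 1 ≤ d)
    (A : Fin n → Set (EuclideanSpace ℝ (Fin d))) (hA : ∀ i, Convex ℝ (A i))
    (Γ : Set (Finset (Fin n)))
    (hΓ : Γ = {F : Finset (Fin n) | (⋂ i ∈ F, A i).Nonempty}) :
    dClosure d Γ = Γ ∪ fullSkel n d := by
  subst hΓ
  have hrank : Module.finrank ℝ (EuclideanSpace ℝ (Fin d)) = d := by simp
  ext F
  simp only [dClosure, fullSkel, Set.mem_setOf_eq, Set.mem_union]
  constructor
  · rintro (h | h)
    · exact Or.inr h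
    by_cases hc : F.card ≤ d
    · exact Or.inr hc
    left
    apply Convex.helly_theorem (𝕜 := ℝ) (F := A) (s := F)
    · rw [hrank]; omega
    · exact fun i _ => hA i
    · intro I hI hIcard
      exact h I hI (by rw [hrank] at hIcard; omega)
  · rintro (h | h)
    · right; intro G hG _
      exact h.mono (Set.biInter_mono hG fun _ _ => subset_rfl)
    · exact Or.inl h
end

section
/- Let Γ be a simplicial complex with a free face E, contained in the unique facet F. Then the reduced simplicial homology of Γ over a field K is isomorphic to that of Γ∖E (all faces containing E removed) in all degrees i > dim E if E is itself a facet of Γ, and in all degrees i > 0 otherwise. -/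
namespace ChordalPaper

open scoped Classical

lemma collapseFace_isComplex {n : ℕ} {Γ : Set (Finset (Fin n))} (hΓ : IsComplex Γ)
    (E : Finset (Fin n)) : IsComplex (collapseFace Γ E) := by
  intro F hF F' hF'
  exact ⟨hΓ F hF.1 F' hF', fun h => hF.2 (h.trans hF')⟩

/-- The simplicial boundary map of the (augmented) chain complex of `Γ` over `K`, from
chains on faces of cardinality `k + 1` to chains on faces of cardinality `k`, given by
the usual alternating sum, with signs coming from the linear order on `Fin n`:
`(∂ g) (G) = ∑_{v ∉ G, G ∪ {v} ∈ Γ} (-1)^{#{b ∈ G : b < v}} g (G ∪ {v})`.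
(For `k = 0` this is the augmentation map to the span of the empty face, so the
resulting homology is the *reduced* homology.) -/
noncomputable def bdry {n : ℕ} (K : Type) [Field K] (Γ : Set (Finset (Fin n))) (k : ℕ) :
    ({F : Finset (Fin n) // F ∈ Γ ∧ F.card = k + 1} → K) →ₗ[K]
      ({F : Finset (Fin n) // F ∈ Γ ∧ F.card = k} → K) :=
  LinearMap.pi fun G =>
    ∑ v : Fin n,
      if h : v ∉ G.1 ∧ insert v G.1 ∈ Γ then
        ((-1 : K) ^ ((G.1.filter (fun b => b < v)).card)) •
          LinearMap.proj (⟨insert v G.1,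
            ⟨h.2, by rw [Finset.card_insert_of_notMem h.1, G.2.2]⟩⟩ :
            {F : Finset (Fin n) // F ∈ Γ ∧ F.card = k + 1})
      else 0

/-- The reduced simplicial homology of `Γ` over `K` in dimension `i`: cycles supported
on `i`-dimensional faces (cardinality `i + 1`) modulo boundaries of `(i+1)`-dimensional
chains. -/
noncomputable def reducedHomology {n : ℕ} (K : Type) [Field K]
    (Γ : Set (Finset (Fin n))) (i : ℕ) : Type :=
  LinearMap.ker (bdry K Γ i) ⧸
    Submodule.comap (LinearMap.ker (bdry K Γ i)).subtype
      (LinearMap.range (bdry K Γ (i + 1)))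

noncomputable instance {n : ℕ} (K : Type) [Field K] (Γ : Set (Finset (Fin n))) (i : ℕ) :
    AddCommGroup (reducedHomology K Γ i) :=
  inferInstanceAs (AddCommGroup (_ ⧸ _))

noncomputable instance {n : ℕ} (K : Type) [Field K] (Γ : Set (Finset (Fin n))) (i : ℕ) :
    Module K (reducedHomology K Γ i) :=
  inferInstanceAs (Module K (_ ⧸ _))

end ChordalPaper

theorem Submodule.nonempty_subquotient_linearEquiv {R M N : Type*} [Ring R]
    [AddCommGroup M] [AddCommGroup N] [Module R M] [Module R N]
    {Z₁ B₁ : Submodule R M} {Z₂ B₂ : Submodule R N} (f : M →ₗ[R] N)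
    (hZ : ∀ x ∈ Z₁, f x ∈ Z₂) (hB : ∀ x ∈ B₁, f x ∈ B₂)
    (hinj : ∀ x ∈ Z₁, f x ∈ B₂ → x ∈ B₁) (hsurj : ∀ y ∈ Z₂, ∃ x ∈ Z₁, y - f x ∈ B₂) :
    Nonempty ((Z₁ ⧸ B₁.comap Z₁.subtype) ≃ₗ[R] (Z₂ ⧸ B₂.comap Z₂.subtype)) := by
  set φ := (B₁.comap Z₁.subtype).mapQ (B₂.comap Z₂.subtype) (f.restrict hZ)
    fun x hx => Submodule.mem_comap.2 (hB x (Submodule.mem_comap.1 hx)) with hφ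
  refine ⟨LinearEquiv.ofBijective φ ⟨(injective_iff_map_eq_zero φ).2 fun q hq => ?_, fun q => ?_⟩⟩
  · obtain ⟨x, rfl⟩ := Submodule.mkQ_surjective _ q
    rw [hφ, Submodule.mkQ_apply, Submodule.mapQ_apply, Submodule.Quotient.mk_eq_zero] at hq
    exact (Submodule.Quotient.mk_eq_zero _).2 (hinj x x.2 hq)
  · obtain ⟨y, rfl⟩ := Submodule.mkQ_surjective _ q
    obtain ⟨x, hx, hyx⟩ := hsurj y y.2
    refine ⟨Submodule.Quotient.mk ⟨x, hx⟩, ?_⟩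
    rw [hφ, Submodule.mapQ_apply, Submodule.mkQ_apply, Submodule.Quotient.eq]
    simpa only [Submodule.mem_comap, Submodule.subtype_apply, AddSubgroupClass.coe_sub,
      LinearMap.coe_restrict_apply, neg_sub] using B₂.neg_mem hyx

theorem Finset.sum_sum_eq_zero_of_antisymm {ι M : Type*} [Fintype ι] [AddCommGroup M]
    (f : ι → ι → M) (hanti : ∀ a b, f a b = -f b a) (hdiag : ∀ a, f a a = 0) :
    ∑ a, ∑ b, f a b = 0 := by
  rw [← Finset.sum_product']
  refine Finset.sum_ninvolution Prod.swap (fun p => by rw [hanti]; exact neg_add_cancel _)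
    (fun p hp hswap => hp ?_) (fun _ => Finset.mem_univ _) fun _ => rfl
  rw [← Prod.fst_swap (p := p), hswap, hdiag]

namespace ChordalPaper

open scoped Classical

section Chains

variable {n : ℕ} (K : Type) [Field K]

abbrev Face (Γ : Set (Finset (Fin n))) (k : ℕ) : Type := {F : Finset (Fin n) // F ∈ Γ ∧ F.card = k}

abbrev Chain (Γ : Set (Finset (Fin n))) (k : ℕ) : Type := Face Γ k → K

/-- Lets boundary and cone formulas be evaluated at arbitrary finsets, without membership
proofs. -/
noncomputable def coeff (Γ : Set (Finset (Fin n))) (k : ℕ) (S : Finset (Fin n)) :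
    Chain K Γ k →ₗ[K] K :=
  if h : S ∈ Γ ∧ S.card = k then LinearMap.proj (⟨S, h⟩ : Face Γ k) else 0

/-- The incidence sign of `S` in `insert v S`, as used by `bdry`. -/
def insertSign (S : Finset (Fin n)) (v : Fin n) : K :=
  (-1) ^ (S.filter (fun b => b < v)).card

variable {K} {Γ : Set (Finset (Fin n))} {k : ℕ}

theorem coeff_coe (x : Chain K Γ k) (G : Face Γ k) : coeff K Γ k G.1 x = x G := by
  rw [coeff, dif_pos G.2, LinearMap.proj_apply]

theorem coeff_eq_zero {S : Finset (Fin n)} (hS : ¬(S ∈ Γ ∧ S.card = k)) (x : Chain K Γ k) :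
    coeff K Γ k S x = 0 := by
  rw [coeff, dif_neg hS, LinearMap.zero_apply]

theorem coeff_eq_zero_of_notMem {S : Finset (Fin n)} (hS : S ∉ Γ) (x : Chain K Γ k) :
    coeff K Γ k S x = 0 :=
  coeff_eq_zero (fun h => hS h.1) x

theorem coeff_eq_zero_of_card_ne {S : Finset (Fin n)} (hS : S.card ≠ k) (x : Chain K Γ k) :
    coeff K Γ k S x = 0 :=
  coeff_eq_zero (fun h => hS h.2) x

theorem insertSign_mul_self (S : Finset (Fin n)) (v : Fin n) :
    insertSign K S v * insertSign K S v = 1 := by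
  rw [insertSign, ← pow_add]
  exact Even.neg_one_pow ⟨_, rfl⟩

theorem insertSign_insert {S : Finset (Fin n)} {v : Fin n} (hv : v ∉ S) (w : Fin n) :
    insertSign K (insert v S) w = (if v < w then -1 else 1) * insertSign K S w := by
  rw [insertSign, insertSign, Finset.filter_insert]
  split
  · rw [Finset.card_insert_of_notMem (fun hc => hv (Finset.mem_of_mem_filter _ hc)), pow_succ,
      mul_comm]
  · rw [one_mul]

theorem insertSign_add_insertSign {S : Finset (Fin n)} {v w : Fin n} (hv : v ∉ S) (hw : w ∉ S)
    (hvw : v ≠ w) :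
    insertSign K S v * insertSign K (insert v S) w
      + insertSign K S w * insertSign K (insert w S) v = 0 := by
  rw [insertSign_insert hv, insertSign_insert hw]
  rcases hvw.lt_or_gt with h | h
  · rw [if_pos h, if_neg (asymm h)]; ring
  · rw [if_neg (asymm h), if_pos h]; ring

theorem insertSign_insert_mul_insertSign_insert {S : Finset (Fin n)} {v w : Fin n} (hv : v ∉ S)
    (hw : w ∉ S) (hvw : v ≠ w) :
    insertSign K (insert v S) w * insertSign K (insert w S) v
      = -(insertSign K S v * insertSign K S w) := by
  rw [insertSign_insert hv, insertSign_insert hw]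
  rcases hvw.lt_or_gt with h | h
  · rw [if_pos h, if_neg (asymm h)]; ring
  · rw [if_neg (asymm h), if_pos h]; ring

theorem bdry_apply (x : Chain K Γ (k + 1)) (G : Face Γ k) :
    bdry K Γ k x G = ∑ v, insertSign K G.1 v * coeff K Γ (k + 1) (insert v G.1) x := by
  rw [bdry, LinearMap.pi_apply, LinearMap.sum_apply]
  refine Finset.sum_congr rfl fun v _ => ?_
  by_cases h : v ∉ G.1 ∧ insert v G.1 ∈ Γ
  · rw [dif_pos h, LinearMap.smul_apply, LinearMap.proj_apply, smul_eq_mul, insertSign,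
      coeff, dif_pos]
    rfl
  · rw [dif_neg h, LinearMap.zero_apply, coeff_eq_zero, mul_zero]
    rintro ⟨hΓ, hcard⟩
    refine h ⟨fun hv => ?_, hΓ⟩
    rw [Finset.insert_eq_of_mem hv, G.2.2] at hcard
    omega

theorem coeff_bdry (hΓ : IsComplex Γ) {S : Finset (Fin n)} (hS : S.card = k)
    (x : Chain K Γ (k + 1)) :
    coeff K Γ k S (bdry K Γ k x)
      = ∑ v, insertSign K S v * coeff K Γ (k + 1) (insert v S) x := by
  by_cases hSΓ : S ∈ Γ
  · exact (coeff_coe _ ⟨S, hSΓ, hS⟩).trans (bdry_apply x ⟨S, hSΓ, hS⟩)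
  · rw [coeff_eq_zero_of_notMem hSΓ]
    refine (Finset.sum_eq_zero fun v _ => ?_).symm
    rw [coeff_eq_zero_of_notMem (fun h => hSΓ (hΓ _ h _ (Finset.subset_insert v S))), mul_zero]

theorem bdry_bdry (hΓ : IsComplex Γ) (x : Chain K Γ (k + 2)) :
    bdry K Γ k (bdry K Γ (k + 1) x) = 0 := by
  funext G
  set t : Fin n → Fin n → K := fun v w => insertSign K G.1 v * insertSign K (insert v G.1) w *
    coeff K Γ (k + 2) (insert w (insert v G.1)) x with ht
  have ht_zero : ∀ v w, v ∈ G.1 ∨ w ∈ insert v G.1 → t v w = 0 := by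
    intro v w hvw
    refine mul_eq_zero_of_right _ (coeff_eq_zero_of_card_ne (ne_of_lt ?_) x)
    have := G.2.2
    rcases hvw with hv | hw
    · rw [Finset.insert_eq_of_mem hv]
      linarith [Finset.card_insert_le w G.1]
    · rw [Finset.insert_eq_of_mem hw]
      linarith [Finset.card_insert_le v G.1]
  have hexpand : ∀ v, insertSign K G.1 v * coeff K Γ (k + 1) (insert v G.1) (bdry K Γ (k + 1) x)
      = ∑ w, t v w := by
    intro v
    by_cases hv : v ∈ G.1
    · rw [Finset.insert_eq_of_mem hv, coeff_eq_zero_of_card_ne (by rw [G.2.2]; omega), mul_zero,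
        Finset.sum_eq_zero fun w _ => ht_zero v w (Or.inl hv)]
    · rw [coeff_bdry hΓ (by rw [Finset.card_insert_of_notMem hv, G.2.2]), Finset.mul_sum]
      simp only [ht, mul_assoc]
  rw [bdry_apply, Finset.sum_congr rfl fun v _ => hexpand v, Pi.zero_apply]
  refine Finset.sum_sum_eq_zero_of_antisymm t (fun v w => ?_) fun v => ht_zero v v
    (Or.inr (Finset.mem_insert_self v _))
  by_cases hdeg : v ∈ G.1 ∨ w ∈ insert v G.1
  · rw [ht_zero v w hdeg, ht_zero w v, neg_zero]
    rcases hdeg with hv | hw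
    · exact Or.inr (Finset.mem_insert_of_mem hv)
    · rcases Finset.mem_insert.1 hw with rfl | hw
      · exact Or.inr (Finset.mem_insert_self _ _)
      · exact Or.inl hw
  · simp only [not_or, Finset.mem_insert, not_or] at hdeg
    obtain ⟨hv, hwv, hw⟩ := hdeg
    simp only [ht, Finset.insert_comm w v]
    linear_combination (coeff K Γ (k + 2) (insert v (insert w G.1)) x) *
      insertSign_add_insertSign (K := K) hv hw (Ne.symm hwv)

end Chains

section Restriction

variable {n : ℕ} {K : Type} [Field K] {Γ Δ : Set (Finset (Fin n))} {k : ℕ}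

variable (K Γ Δ k) in
/-- Restriction when `Δ ⊆ Γ`, extension by zero when `Γ ⊆ Δ`. -/
noncomputable def restrictChain : Chain K Γ k →ₗ[K] Chain K Δ k :=
  LinearMap.pi fun G => coeff K Γ k G.1

variable (Δ) in
def IsSupportedOn (x : Chain K Γ k) : Prop :=
  ∀ G : Face Γ k, G.1 ∉ Δ → x G = 0

theorem restrictChain_apply (x : Chain K Γ k) (G : Face Δ k) :
    restrictChain K Γ Δ k x G = coeff K Γ k G.1 x :=
  rfl

theorem coeff_restrictChain (x : Chain K Γ k) (S : Finset (Fin n)) :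
    coeff K Δ k S (restrictChain K Γ Δ k x) = if S ∈ Δ then coeff K Γ k S x else 0 := by
  by_cases h : S ∈ Δ ∧ S.card = k
  · rw [coeff_coe _ ⟨S, h⟩, restrictChain_apply, if_pos h.1]
  · rw [coeff_eq_zero h]
    split_ifs with hS
    · exact (coeff_eq_zero_of_card_ne (fun hc => h ⟨hS, hc⟩) x).symm
    · rfl

theorem coeff_restrictChain_of_subset (hΔ : Δ ⊆ Γ) (x : Chain K Δ k) (S : Finset (Fin n)) :
    coeff K Γ k S (restrictChain K Δ Γ k x) = coeff K Δ k S x := by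
  rw [coeff_restrictChain]
  split_ifs with hS
  · rfl
  · exact (coeff_eq_zero_of_notMem (fun h => hS (hΔ h)) x).symm

theorem IsSupportedOn.coeff_eq_zero {x : Chain K Γ k} (hx : IsSupportedOn Δ x)
    {S : Finset (Fin n)} (hS : S ∉ Δ) : coeff K Γ k S x = 0 := by
  by_cases h : S ∈ Γ ∧ S.card = k
  · rw [coeff_coe x ⟨S, h⟩]
    exact hx ⟨S, h⟩ hS
  · exact ChordalPaper.coeff_eq_zero h x

theorem restrictChain_restrictChain_of_subset (hΔ : Δ ⊆ Γ) (x : Chain K Δ k) :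
    restrictChain K Γ Δ k (restrictChain K Δ Γ k x) = x := by
  funext G
  rw [restrictChain_apply, coeff_restrictChain_of_subset hΔ, coeff_coe]

theorem IsSupportedOn.restrictChain_restrictChain {x : Chain K Γ k} (hx : IsSupportedOn Δ x) :
    restrictChain K Δ Γ k (restrictChain K Γ Δ k x) = x := by
  funext G
  rw [restrictChain_apply, coeff_restrictChain]
  split_ifs with hG
  · exact coeff_coe x G
  · exact (hx G hG).symm

theorem bdry_restrictChain (hΔc : IsComplex Δ) (hΔ : Δ ⊆ Γ) (x : Chain K Δ (k + 1)) :
    bdry K Γ k (restrictChain K Δ Γ (k + 1) x) = restrictChain K Δ Γ k (bdry K Δ k x) := by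
  funext G
  rw [bdry_apply, restrictChain_apply, coeff_bdry hΔc G.2.2]
  simp only [coeff_restrictChain_of_subset hΔ]

theorem IsSupportedOn.restrictChain_bdry (hΔ : Δ ⊆ Γ) {x : Chain K Γ (k + 1)}
    (hx : IsSupportedOn Δ x) :
    restrictChain K Γ Δ k (bdry K Γ k x) = bdry K Δ k (restrictChain K Γ Δ (k + 1) x) := by
  funext G
  rw [restrictChain_apply, coeff_coe _ ⟨G.1, hΔ G.2.1, G.2.2⟩, bdry_apply, bdry_apply]
  refine Finset.sum_congr rfl fun v _ => ?_
  rw [coeff_restrictChain]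
  split_ifs with hv
  · rfl
  · rw [hx.coeff_eq_zero hv]

end Restriction

/-- `x ↦ x - ∂hx - h∂x` is homotopic to the identity, lands in the chains of `Δ` and fixes them,
so it inverts the inclusion `Δ ⊆ Γ` on homology. -/
theorem nonempty_reducedHomology_equiv_of_homotopy {n : ℕ} (K : Type) [Field K]
    {Γ Δ : Set (Finset (Fin n))} (hΓ : IsComplex Γ) (hΔc : IsComplex Δ) (hΔ : Δ ⊆ Γ) (i : ℕ)
    (h : ∀ k, Chain K Γ k →ₗ[K] Chain K Γ (k + 1))
    (h_restrictChain : ∀ x : Chain K Δ (i + 1), h (i + 1) (restrictChain K Δ Γ (i + 1) x) = 0)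
    (h_deform : ∀ k, i ≤ k → ∀ x : Chain K Γ (k + 1),
      IsSupportedOn Δ (x - bdry K Γ (k + 1) (h (k + 1) x) - h k (bdry K Γ k x))) :
    Nonempty (reducedHomology K Δ i ≃ₗ[K] reducedHomology K Γ i) := by
  refine Submodule.nonempty_subquotient_linearEquiv (restrictChain K Δ Γ (i + 1))
    (fun x hx => ?_) (fun _ ⟨y, hy⟩ => ?_) (fun x hx ⟨y, hy⟩ => ?_) fun z hz => ?_
  · rw [LinearMap.mem_ker] at hx ⊢
    rw [bdry_restrictChain hΔc hΔ, hx, map_zero]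
  · exact ⟨restrictChain K Δ Γ (i + 2) y, by rw [bdry_restrictChain hΔc hΔ, hy]⟩
  · set y' := y - bdry K Γ (i + 2) (h (i + 2) y) - h (i + 1) (bdry K Γ (i + 1) y)
    have hy' : bdry K Γ (i + 1) y' = bdry K Γ (i + 1) y := by
      rw [map_sub, map_sub, bdry_bdry hΓ, hy, h_restrictChain, map_zero, sub_zero, sub_zero]
    refine ⟨restrictChain K Γ Δ (i + 2) y', ?_⟩
    rw [← (h_deform (i + 1) (by omega) y).restrictChain_bdry hΔ, hy', hy,
      restrictChain_restrictChain_of_subset hΔ]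
  · rw [LinearMap.mem_ker] at hz
    have hsupp := h_deform i le_rfl z
    rw [hz, map_zero, sub_zero] at hsupp
    refine ⟨restrictChain K Γ Δ (i + 1) (z - bdry K Γ (i + 1) (h (i + 1) z)), ?_, ?_⟩
    · rw [LinearMap.mem_ker, ← hsupp.restrictChain_bdry hΔ, map_sub, bdry_bdry hΓ, hz, sub_zero,
        map_zero]
    · rw [hsupp.restrictChain_restrictChain, sub_sub_cancel]
      exact LinearMap.mem_range_self _ _

section Cone

variable {n : ℕ} {K : Type} [Field K] {Γ : Set (Finset (Fin n))} {E F : Finset (Fin n)}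
  {v₀ : Fin n} {k : ℕ}

theorem IsFreeFace.exists_mem_iff_subset (hΓ : IsComplex Γ) (hE : IsFreeFace Γ E) :
    ∃ F, ∀ S, E ⊆ S → (S ∈ Γ ↔ S ⊆ F) := by
  obtain ⟨-, F, ⟨hF, -⟩, huniq⟩ := hE
  refine ⟨F, fun S hES => ⟨fun hS => ?_, fun hSF => hΓ F hF.1 S hSF⟩⟩
  obtain ⟨H, hSH, hH⟩ := Finite.exists_le_maximal (p := (· ∈ Γ)) hS
  have hH : IsFacet Γ H := ⟨hH.1, fun G hG hHG => le_antisymm (hH.2 hG hHG) hHG⟩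
  exact huniq H ⟨hH, hES.trans hSH⟩ ▸ hSH

variable (K Γ E v₀ k) in
/-- The contracting homotopy of the simplex `F ⊇ E` coning from `v₀ ∈ F ∖ E`, restricted to the
faces containing `E`. -/
noncomputable def coneMap : Chain K Γ k →ₗ[K] Chain K Γ (k + 1) :=
  LinearMap.pi fun H =>
    if insert v₀ E ⊆ H.1 then insertSign K (H.1.erase v₀) v₀ • coeff K Γ k (H.1.erase v₀) else 0

theorem coneMap_apply (x : Chain K Γ k) (H : Face Γ (k + 1)) :
    coneMap K Γ E v₀ k x H = if insert v₀ E ⊆ H.1 then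
      insertSign K (H.1.erase v₀) v₀ * coeff K Γ k (H.1.erase v₀) x else 0 := by
  rw [coneMap, LinearMap.pi_apply]
  split_ifs <;> rfl

theorem coneMap_restrictChain_collapseFace (hv₀E : v₀ ∉ E) (x : Chain K (collapseFace Γ E) k) :
    coneMap K Γ E v₀ k (restrictChain K (collapseFace Γ E) Γ k x) = 0 := by
  funext H
  rw [coneMap_apply, Pi.zero_apply]
  split_ifs with hH
  · have hEH : E ⊆ H.1.erase v₀ :=
      Finset.subset_erase.2 ⟨(Finset.subset_insert v₀ E).trans hH, hv₀E⟩
    rw [coeff_restrictChain_of_subset (fun _ hS => hS.1),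
      coeff_eq_zero_of_notMem (fun hS => hS.2 hEH), mul_zero]
  · rfl

section Star

variable (hstar : ∀ S, E ⊆ S → (S ∈ Γ ↔ S ⊆ F)) (hv₀F : v₀ ∈ F) (hv₀E : v₀ ∉ E)
include hstar hv₀F hv₀E

/-- Since the faces containing `E` are exactly the subsets of `F` containing `E`, the formula of
`coneMap_apply` stays valid at non-faces. -/
theorem coeff_coneMap (x : Chain K Γ k) (T : Finset (Fin n)) :
    coeff K Γ (k + 1) T (coneMap K Γ E v₀ k x) = if insert v₀ E ⊆ T then
      insertSign K (T.erase v₀) v₀ * coeff K Γ k (T.erase v₀) x else 0 := by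
  by_cases hT : T ∈ Γ ∧ T.card = k + 1
  · rw [coeff_coe _ ⟨T, hT⟩, coneMap_apply]
  · rw [coeff_eq_zero hT]
    split_ifs with hv₀ET
    · obtain ⟨hv₀T, hET⟩ := Finset.insert_subset_iff.1 hv₀ET
      have hET' : E ⊆ T.erase v₀ := Finset.subset_erase.2 ⟨hET, hv₀E⟩
      refine (mul_eq_zero_of_right _ (coeff_eq_zero (fun h => hT ⟨?_, ?_⟩) x)).symm
      · refine (hstar T hET).2 ?_
        rw [← Finset.insert_erase hv₀T]
        exact Finset.insert_subset hv₀F ((hstar _ hET').1 h.1)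
      · have := Finset.card_pos.2 ⟨v₀, hv₀T⟩
        rw [Finset.card_erase_of_mem hv₀T] at h
        omega
    · rfl

theorem coeff_bdry_coneMap_add_of_notMem (hΓ : IsComplex Γ) {S : Finset (Fin n)} (hES : E ⊆ S)
    (hv₀S : v₀ ∉ S) (hS : S.card = k + 1) (x : Chain K Γ (k + 1)) :
    coeff K Γ (k + 1) S (bdry K Γ (k + 1) (coneMap K Γ E v₀ (k + 1) x))
      + coeff K Γ (k + 1) S (coneMap K Γ E v₀ k (bdry K Γ k x)) = coeff K Γ (k + 1) S x := by
  have hv₀ES : ¬insert v₀ E ⊆ S := fun h => hv₀S (Finset.insert_subset_iff.1 h).1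
  rw [coeff_coneMap hstar hv₀F hv₀E _ S, if_neg hv₀ES, add_zero, coeff_bdry hΓ hS,
    Finset.sum_eq_single v₀]
  · rw [coeff_coneMap hstar hv₀F hv₀E, if_pos (Finset.insert_subset_insert v₀ hES),
      Finset.erase_insert hv₀S, ← mul_assoc, insertSign_mul_self, one_mul]
  · intro v _ hv
    rw [coeff_coneMap hstar hv₀F hv₀E, if_neg, mul_zero]
    intro h
    rcases Finset.mem_insert.1 (Finset.insert_subset_iff.1 h).1 with h | h
    exacts [hv h.symm, hv₀S h]
  · exact fun h => absurd (Finset.mem_univ v₀) h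

theorem coeff_bdry_coneMap_add_insert (hΓ : IsComplex Γ) {T : Finset (Fin n)} (hET : E ⊆ T)
    (hv₀T : v₀ ∉ T) (hT : T.card = k) (x : Chain K Γ (k + 1)) :
    coeff K Γ (k + 1) (insert v₀ T) (bdry K Γ (k + 1) (coneMap K Γ E v₀ (k + 1) x))
      + coeff K Γ (k + 1) (insert v₀ T) (coneMap K Γ E v₀ k (bdry K Γ k x))
      = coeff K Γ (k + 1) (insert v₀ T) x := by
  have hS : (insert v₀ T).card = k + 1 := by rw [Finset.card_insert_of_notMem hv₀T, hT]
  have hcone : ∀ v, insert v₀ E ⊆ insert v (insert v₀ T) := fun v =>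
    (Finset.insert_subset_insert v₀ hET).trans (Finset.subset_insert _ _)
  rw [coeff_bdry hΓ hS, coeff_coneMap hstar hv₀F hv₀E, if_pos (Finset.insert_subset_insert v₀ hET),
    Finset.erase_insert hv₀T, coeff_bdry hΓ hT, Finset.mul_sum, ← Finset.sum_add_distrib]
  simp only [coeff_coneMap hstar hv₀F hv₀E, if_pos (hcone _)]
  refine (Finset.sum_eq_single v₀ (fun v _ hv => ?_)
    fun h => absurd (Finset.mem_univ v₀) h).trans ?_
  · by_cases hvT : v ∈ T
    · rw [Finset.insert_eq_of_mem (Finset.mem_insert_of_mem hvT), Finset.erase_insert hv₀T,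
        Finset.insert_eq_of_mem hvT, coeff_eq_zero_of_card_ne (by omega)]
      simp only [mul_zero, add_zero]
    · rw [Finset.insert_comm, Finset.erase_insert (by simp [Ne.symm hv, hv₀T])]
      linear_combination coeff K Γ (k + 1) (insert v T) x *
        insertSign_insert_mul_insertSign_insert (K := K) hv₀T hvT (Ne.symm hv)
  · rw [Finset.insert_eq_of_mem (Finset.mem_insert_self v₀ T), Finset.erase_insert hv₀T,
      coeff_eq_zero_of_card_ne (by omega), mul_zero, mul_zero, zero_add, ← mul_assoc,
      insertSign_mul_self, one_mul]

theorem isSupportedOn_collapseFace_sub_coneMap (hΓ : IsComplex Γ) (x : Chain K Γ (k + 1)) :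
    IsSupportedOn (collapseFace Γ E) (x - bdry K Γ (k + 1) (coneMap K Γ E v₀ (k + 1) x)
      - coneMap K Γ E v₀ k (bdry K Γ k x)) := by
  intro G hG
  have hEG : E ⊆ G.1 := not_not.1 fun h => hG ⟨G.2.1, h⟩
  refine (coeff_coe _ G).symm.trans ?_
  rw [map_sub, map_sub, sub_sub, sub_eq_zero]
  by_cases hv₀G : v₀ ∈ G.1
  · have hT : (G.1.erase v₀).card = k := by rw [Finset.card_erase_of_mem hv₀G, G.2.2]; rfl
    rw [← Finset.insert_erase hv₀G]
    exact (coeff_bdry_coneMap_add_insert hstar hv₀F hv₀E hΓ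
      (Finset.subset_erase.2 ⟨hEG, hv₀E⟩) (Finset.notMem_erase v₀ _) hT x).symm
  · exact (coeff_bdry_coneMap_add_of_notMem hstar hv₀F hv₀E hΓ hEG hv₀G G.2.2 x).symm

end Star

end Cone

variable {n : ℕ} (K : Type) [Field K] {Γ : Set (Finset (Fin n))} {E : Finset (Fin n)}

theorem nonempty_reducedHomology_collapseFace_equiv_of_isFacet (hΓ : IsComplex Γ)
    (hE : IsFacet Γ E) {i : ℕ} (hi : E.card ≤ i) :
    Nonempty (reducedHomology K (collapseFace Γ E) i ≃ₗ[K] reducedHomology K Γ i) := by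
  refine nonempty_reducedHomology_equiv_of_homotopy K hΓ (collapseFace_isComplex hΓ E)
    (fun _ hS => hS.1) i (fun _ => 0) (fun _ => rfl) fun k hk x G hG => ?_
  have hGE : G.1 = E := hE.2 G.1 G.2.1 (not_not.1 fun h => hG ⟨G.2.1, h⟩)
  have hcard := G.2.2
  rw [hGE] at hcard
  omega

theorem nonempty_reducedHomology_collapseFace_equiv_of_not_isFacet (hΓ : IsComplex Γ)
    (hE : IsFreeFace Γ E) (hE' : ¬IsFacet Γ E) (i : ℕ) :
    Nonempty (reducedHomology K (collapseFace Γ E) i ≃ₗ[K] reducedHomology K Γ i) := by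
  obtain ⟨F, hstar⟩ := hE.exists_mem_iff_subset hΓ
  have hEF : E ⊂ F := by
    refine Finset.ssubset_iff_subset_ne.2 ⟨(hstar E le_rfl).1 hE.1, ?_⟩
    rintro rfl
    exact hE' ⟨hE.1, fun G hG hEG => ((hstar G hEG).1 hG).antisymm hEG⟩
  obtain ⟨v₀, hv₀F, hv₀E⟩ := Finset.exists_of_ssubset hEF
  exact nonempty_reducedHomology_equiv_of_homotopy K hΓ (collapseFace_isComplex hΓ E)
    (fun _ hS => hS.1) i (coneMap K Γ E v₀) (coneMap_restrictChain_collapseFace hv₀E)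
    fun _ _ => isSupportedOn_collapseFace_sub_coneMap hstar hv₀F hv₀E hΓ

end ChordalPaper

open ChordalPaper in
theorem stmt19_general (n : ℕ) (K : Type) [Field K] (Γ : Set (Finset (Fin n)))
    (hΓ : IsComplex Γ) (E : Finset (Fin n)) (hE : IsFreeFace Γ E) (i : ℕ)
    (hi₁ : IsFacet Γ E → E.card ≤ i) :
    Nonempty (reducedHomology K Γ i ≃ₗ[K] reducedHomology K (collapseFace Γ E) i) := by
  by_cases hfac : IsFacet Γ E
  · exact (nonempty_reducedHomology_collapseFace_equiv_of_isFacet K hΓ hfac (hi₁ hfac)).map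
      LinearEquiv.symm
  · exact (nonempty_reducedHomology_collapseFace_equiv_of_not_isFacet K hΓ hE hfac i).map
      LinearEquiv.symm

open ChordalPaper in
/-- if `E` is a free face of `Γ`, the reduced simplicial homology of `Γ`
over a field `K` is isomorphic to that of `Γ∖E` (all faces containing `E` removed) in
all degrees `i > dim E` (i.e. `E.card ≤ i`) when `E` is itself a facet of `Γ`, and in
all degrees `i > 0` otherwise. -/
theorem stmt19 (n : ℕ) (K : Type) [Field K] (Γ : Set (Finset (Fin n)))
    (hΓ : IsComplex Γ) (E : Finset (Fin n)) (hE : IsFreeFace Γ E) (i : ℕ)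
    (hi₁ : IsFacet Γ E → E.card ≤ i) (hi₂ : ¬ IsFacet Γ E → 1 ≤ i) :
    Nonempty (reducedHomology K Γ i ≃ₗ[K] reducedHomology K (collapseFace Γ E) i) :=
  stmt19_general n K Γ hΓ E hE i hi₁
end
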